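/- arXiv:2006.08591 — 7 statements merged into one kernel-verified Lean document; each statement's English description precedes it below -/
import Mathlib

section
/- Let W ∈ ℝ^{n×n} and m, L > 0 satisfy (I − W) ⪰ mI and ‖I − W‖₂ ≤ L (operator 2-norm), let σ : ℝⁿ → ℝⁿ be 1-Lipschitz (in the Euclidean norm), let c ∈ ℝⁿ, and let 0 < α < 2m/L². Then the map T(z) = σ((1 − α)z + α(W z + c)) is Lipschitz with constant κ = √(1 − 2αm + α²L²) < 1; consequently T has a unique fixed point z⋆ and the iterates z^{k+1} = T(z^k) satisfy ‖z^k − z⋆‖₂ ≤ κ^k ‖z⁰ − z⋆‖₂ for every starting point z⁰, i.e., the damped forward-backward iteration converges linearly to the unique equilibrium. -/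
/-!
For `u = z₁ - z₂` the two damped steps differ by `u - α (I - W) u`, and
`‖u - α (I - W) u‖² = ‖u‖² - 2α⟪u, (I - W) u⟫ + α²‖(I - W) u‖² ≤ (1 - 2αm + α²L²) ‖u‖²`,
since the quadratic form of `I - W` only sees its symmetric part. Composing with the
1-Lipschitz `σ` keeps the constant `κ`, which is `< 1` for `0 < α < 2m/L²`; Banach's
fixed point theorem gives the equilibrium, and `κ^k` is a Lipschitz constant of `T^[k]`.
-/

open Matrix

theorem Matrix.inner_toEuclideanLin_transpose_self {ι : Type*} [Fintype ι] [DecidableEq ι]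
    (B : Matrix ι ι ℝ) (u : EuclideanSpace ℝ ι) :
    inner ℝ u (toEuclideanLin Bᵀ u) = inner ℝ u (toEuclideanLin B u) := by
  rw [← conjTranspose_eq_transpose_of_trivial, toEuclideanLin_conjTranspose_eq_adjoint,
    LinearMap.adjoint_inner_right, real_inner_comm]

theorem Matrix.mul_norm_sq_le_inner_toEuclideanLin {ι : Type*} [Fintype ι] [DecidableEq ι]
    {B : Matrix ι ι ℝ} {m : ℝ} (hB : ((1/2 : ℝ) • (B + Bᵀ) - m • 1).PosSemidef)
    (u : EuclideanSpace ℝ ι) :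
    m * ‖u‖ ^ 2 ≤ inner ℝ u (toEuclideanLin B u) := by
  have h := (isPositive_toEuclideanLin_iff.mpr hB).inner_nonneg_right u
  simp only [map_sub, map_smul, map_add, LinearMap.sub_apply, LinearMap.smul_apply,
    LinearMap.add_apply, inner_sub_right, inner_smul_right, inner_add_right,
    inner_toEuclideanLin_transpose_self] at h
  simp only [toLpLin_one, LinearMap.id_coe, id_eq, real_inner_self_eq_norm_sq] at h
  linarith

theorem norm_sub_smul_le_sqrt_mul_norm {E : Type*} [NormedAddCommGroup E]
    [InnerProductSpace ℝ E] {u v : E} {m L α : ℝ} (hα : 0 ≤ α)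
    (hmono : m * ‖u‖ ^ 2 ≤ inner ℝ u v) (hLip : ‖v‖ ≤ L * ‖u‖) :
    ‖u - α • v‖ ≤ √(1 - 2 * α * m + α ^ 2 * L ^ 2) * ‖u‖ := by
  have hsq : ‖u - α • v‖ ^ 2 ≤ (1 - 2 * α * m + α ^ 2 * L ^ 2) * ‖u‖ ^ 2 :=
    calc ‖u - α • v‖ ^ 2 = ‖u‖ ^ 2 - 2 * α * inner ℝ u v + α ^ 2 * ‖v‖ ^ 2 := by
          rw [norm_sub_sq_real, real_inner_smul_right, norm_smul, mul_pow, Real.norm_eq_abs,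
            sq_abs]
          ring
      _ ≤ ‖u‖ ^ 2 - 2 * α * (m * ‖u‖ ^ 2) + α ^ 2 * (L * ‖u‖) ^ 2 := by
          gcongr
      _ = _ := by ring
  calc ‖u - α • v‖ = √(‖u - α • v‖ ^ 2) := (Real.sqrt_sq (norm_nonneg _)).symm
    _ ≤ √((1 - 2 * α * m + α ^ 2 * L ^ 2) * ‖u‖ ^ 2) := Real.sqrt_le_sqrt hsq
    _ = _ := by rw [Real.sqrt_mul' _ (sq_nonneg _), Real.sqrt_sq (norm_nonneg _)]

theorem sqrt_one_sub_two_mul_add_sq_lt_one {m L α : ℝ} (hα0 : 0 < α) (hα : α < 2 * m / L ^ 2) :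
    √(1 - 2 * α * m + α ^ 2 * L ^ 2) < 1 := by
  rcases eq_or_ne L 0 with rfl | hL
  · simp at hα; linarith
  have hαL : α * L ^ 2 < 2 * m := (lt_div_iff₀ (by positivity)).mp hα
  rw [Real.sqrt_lt' one_pos]
  nlinarith

theorem LipschitzWith.dist_iterate_le_of_isFixedPt {X : Type*} [PseudoMetricSpace X]
    {K : NNReal} {f : X → X} (hf : LipschitzWith K f) {z : X} (hz : Function.IsFixedPt f z)
    (x : X) (k : ℕ) : dist (f^[k] x) z ≤ K ^ k * dist x z := by
  simpa [(hz.iterate k).eq] using (hf.iterate k).dist_le_mul x z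

theorem forward_backward_linear_convergence_general (n : ℕ)
    (W : Matrix (Fin n) (Fin n) ℝ) (m L : ℝ)
    (hmono : ((1/2 : ℝ) • ((1 - W) + (1 - W)ᵀ) -
        m • (1 : Matrix (Fin n) (Fin n) ℝ)).PosSemidef)
    (hLip : ∀ z : EuclideanSpace ℝ (Fin n), ‖Matrix.toEuclideanLin (1 - W) z‖ ≤ L * ‖z‖)
    (σ : EuclideanSpace ℝ (Fin n) → EuclideanSpace ℝ (Fin n)) (hσ : LipschitzWith 1 σ)
    (c : EuclideanSpace ℝ (Fin n)) (α : ℝ) (hα0 : 0 < α) (hα : α < 2 * m / L^2)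
    (T : EuclideanSpace ℝ (Fin n) → EuclideanSpace ℝ (Fin n))
    (hT : ∀ z, T z = σ ((1 - α) • z + α • (Matrix.toEuclideanLin W z + c)))
    (κ : ℝ) (hκ : κ = Real.sqrt (1 - 2*α*m + α^2 * L^2)) :
    κ < 1 ∧
    (∀ z₁ z₂ : EuclideanSpace ℝ (Fin n), dist (T z₁) (T z₂) ≤ κ * dist z₁ z₂) ∧
    ∃ zs : EuclideanSpace ℝ (Fin n), T zs = zs ∧ (∀ z', T z' = z' → z' = zs) ∧
      ∀ (z₀ : EuclideanSpace ℝ (Fin n)) (k : ℕ),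
        dist (T^[k] z₀) zs ≤ κ ^ k * dist z₀ zs := by
  have hκ1 : κ < 1 := hκ ▸ sqrt_one_sub_two_mul_add_sq_lt_one hα0 hα
  have hκ0 : 0 ≤ κ := hκ ▸ Real.sqrt_nonneg _
  have hstep (z₁ z₂ : EuclideanSpace ℝ (Fin n)) :
      dist ((1 - α) • z₁ + α • (toEuclideanLin W z₁ + c))
        ((1 - α) • z₂ + α • (toEuclideanLin W z₂ + c)) ≤ κ * dist z₁ z₂ := by
    have hdiff : (1 - α) • z₁ + α • (toEuclideanLin W z₁ + c) -
        ((1 - α) • z₂ + α • (toEuclideanLin W z₂ + c)) =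
        (z₁ - z₂) - α • toEuclideanLin (1 - W) (z₁ - z₂) := by
      simp only [map_sub, LinearMap.sub_apply, toLpLin_one, LinearMap.id_coe, id_eq]
      module
    rw [dist_eq_norm, dist_eq_norm, hdiff, hκ]
    exact norm_sub_smul_le_sqrt_mul_norm hα0.le
      (mul_norm_sq_le_inner_toEuclideanLin hmono _) (hLip _)
  have hTlip : LipschitzWith ⟨κ, hκ0⟩ T := .of_dist_le_mul fun z₁ z₂ => by
    rw [hT, hT]
    calc _ ≤ dist _ _ := by simpa using hσ.dist_le_mul _ _
      _ ≤ _ := hstep z₁ z₂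
  have hTcontr : ContractingWith ⟨κ, hκ0⟩ T := ⟨hκ1, hTlip⟩
  exact ⟨hκ1, hTlip.dist_le_mul, ContractingWith.fixedPoint T hTcontr,
    hTcontr.fixedPoint_isFixedPt, fun _ hz => hTcontr.fixedPoint_unique hz,
    hTlip.dist_iterate_le_of_isFixedPt hTcontr.fixedPoint_isFixedPt⟩

/-- **Linear convergence of damped forward-backward iteration.**
If `I - W ⪰ mI`, `‖I - W‖₂ ≤ L`, `σ` is 1-Lipschitz, and `0 < α < 2m/L²`, then
`T(z) = σ((1-α)z + α(Wz + c))` is a contraction with constant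
`κ = √(1 - 2αm + α²L²) < 1`; hence it has a unique fixed point `z⋆` and the iterates
converge linearly: `‖z^k - z⋆‖ ≤ κ^k ‖z⁰ - z⋆‖`. -/
theorem forward_backward_linear_convergence (n : ℕ)
    (W : Matrix (Fin n) (Fin n) ℝ) (m L : ℝ) (hm : 0 < m) (hL : 0 < L)
    (hmono : ((1/2 : ℝ) • ((1 - W) + (1 - W)ᵀ) -
        m • (1 : Matrix (Fin n) (Fin n) ℝ)).PosSemidef)
    (hLip : ∀ z : EuclideanSpace ℝ (Fin n), ‖Matrix.toEuclideanLin (1 - W) z‖ ≤ L * ‖z‖)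
    (σ : EuclideanSpace ℝ (Fin n) → EuclideanSpace ℝ (Fin n)) (hσ : LipschitzWith 1 σ)
    (c : EuclideanSpace ℝ (Fin n)) (α : ℝ) (hα0 : 0 < α) (hα : α < 2 * m / L^2)
    (T : EuclideanSpace ℝ (Fin n) → EuclideanSpace ℝ (Fin n))
    (hT : ∀ z, T z = σ ((1 - α) • z + α • (Matrix.toEuclideanLin W z + c)))
    (κ : ℝ) (hκ : κ = Real.sqrt (1 - 2*α*m + α^2 * L^2)) :
    κ < 1 ∧
    (∀ z₁ z₂ : EuclideanSpace ℝ (Fin n), dist (T z₁) (T z₂) ≤ κ * dist z₁ z₂) ∧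
    ∃ zs : EuclideanSpace ℝ (Fin n), T zs = zs ∧ (∀ z', T z' = z' → z' = zs) ∧
      ∀ (z₀ : EuclideanSpace ℝ (Fin n)) (k : ℕ),
        dist (T^[k] z₀) zs ≤ κ ^ k * dist z₀ zs :=
  forward_backward_linear_convergence_general n W m L hmono hLip σ hσ c α hα0 hα T hT κ hκ
end

section
/- Let W ∈ ℝ^{n×n} and m > 0 satisfy (I − W) ⪰ mI, let U ∈ ℝ^{n×d}, x ∈ ℝ^d and b ∈ ℝⁿ. Then there exists a unique z⋆ ∈ ℝⁿ satisfying z⋆ = max(W z⋆ + U x + b, 0), where max(·, 0) is applied componentwise (the ReLU). That is, the ReLU monotone operator equilibrium network has exactly one equilibrium point. -/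
/-!
Write `A = 1 - W` and `c = U x + b`. For every `α > 0`, coordinatewise
`a = max v 0 ↔ a = max (a - α (a - v)) 0`, so the equilibria are exactly the fixed points of
the forward–backward map `z ↦ ReLU (z - α (A z - c))`. In `ℓ²` the ReLU is nonexpansive, and the
strong monotonicity `⟪v, A v⟫ ≥ m ‖v‖²` makes `v ↦ v - α A v` a strict contraction for small
`α`; Banach's fixed point theorem then gives exactly one equilibrium.
-/

open Matrix

open scoped RealInnerProductSpace

section StronglyMonotone

variable {E : Type*} [NormedAddCommGroup E] [InnerProductSpace ℝ E]

/- The step `m / (‖A‖² + m²)`, rather than the customary `m / ‖A‖²`, needs no case split on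
`A = 0`: the squared rate is `‖A‖² / K - (m² / K)²` with `K = ‖A‖² + m²`. -/
theorem norm_sub_smul_apply_le_of_strongly_monotone (A : E →L[ℝ] E) {m : ℝ} (hm : 0 < m)
    (hA : ∀ v, m * ‖v‖ ^ 2 ≤ ⟪v, A v⟫) (v : E) :
    ‖v - (m / (‖A‖ ^ 2 + m ^ 2)) • A v‖ ≤ ‖A‖ / √(‖A‖ ^ 2 + m ^ 2) * ‖v‖ := by
  set K := ‖A‖ ^ 2 + m ^ 2
  have hK : 0 < K := by positivity
  have hAv : ‖A v‖ ^ 2 ≤ ‖A‖ ^ 2 * ‖v‖ ^ 2 := by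
    rw [← mul_pow]; exact pow_le_pow_left₀ (norm_nonneg _) (A.le_opNorm v) 2
  have hsq : ‖v - (m / K) • A v‖ ^ 2 ≤ ‖A‖ ^ 2 / K * ‖v‖ ^ 2 :=
    calc ‖v - (m / K) • A v‖ ^ 2 = ‖v‖ ^ 2 - 2 * (m / K * ⟪v, A v⟫) + (m / K) ^ 2 * ‖A v‖ ^ 2 := by
          rw [norm_sub_sq_real, inner_smul_right, norm_smul, mul_pow, Real.norm_eq_abs, sq_abs]
      _ ≤ ‖v‖ ^ 2 - 2 * (m / K * (m * ‖v‖ ^ 2)) + (m / K) ^ 2 * (‖A‖ ^ 2 * ‖v‖ ^ 2) := by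
          gcongr
          exact hA v
      _ = ‖A‖ ^ 2 / K * ‖v‖ ^ 2 - (m ^ 2 / K) ^ 2 * ‖v‖ ^ 2 := by field_simp; ring
      _ ≤ ‖A‖ ^ 2 / K * ‖v‖ ^ 2 := sub_le_self _ (by positivity)
  calc ‖v - (m / K) • A v‖ = √(‖v - (m / K) • A v‖ ^ 2) := (Real.sqrt_sq (norm_nonneg _)).symm
    _ ≤ √(‖A‖ ^ 2 / K * ‖v‖ ^ 2) := Real.sqrt_le_sqrt hsq
    _ = ‖A‖ / √K * ‖v‖ := by
      rw [Real.sqrt_mul (by positivity), Real.sqrt_div' _ hK.le, Real.sqrt_sq (norm_nonneg _),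
        Real.sqrt_sq (norm_nonneg _)]

theorem exists_pos_existsUnique_forwardBackward_fixedPoint [CompleteSpace E] (A : E →L[ℝ] E)
    {m : ℝ} (hm : 0 < m) (hA : ∀ v, m * ‖v‖ ^ 2 ≤ ⟪v, A v⟫) {P : E → E}
    (hP : LipschitzWith 1 P) (c : E) : ∃ α : ℝ, 0 < α ∧ ∃! z, P (z - α • (A z - c)) = z := by
  set K := ‖A‖ ^ 2 + m ^ 2
  have hK : 0 < K := by positivity
  set q : NNReal := ⟨‖A‖ / √K, by positivity⟩
  have hq : q < 1 := by
    change ‖A‖ / √K < 1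
    rw [div_lt_one (Real.sqrt_pos.mpr hK), Real.lt_sqrt (norm_nonneg _)]
    exact lt_add_of_pos_right _ (pow_pos hm 2)
  have hstep : LipschitzWith q fun z => z - (m / K) • (A z - c) :=
    LipschitzWith.of_dist_le_mul fun z w => by
      rw [dist_eq_norm, dist_eq_norm]
      calc ‖z - (m / K) • (A z - c) - (w - (m / K) • (A w - c))‖
          = ‖z - w - (m / K) • A (z - w)‖ := by rw [map_sub]; congr 1; module
        _ ≤ _ := norm_sub_smul_apply_le_of_strongly_monotone A hm hA (z - w)
  have hF : ContractingWith q fun z => P (z - (m / K) • (A z - c)) :=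
    ⟨hq, by simpa [Function.comp_def] using hP.comp hstep⟩
  exact ⟨m / K, div_pos hm hK, _, hF.fixedPoint_isFixedPt, fun _ hz => hF.fixedPoint_unique hz⟩

end StronglyMonotone

theorem eq_max_sub_mul_sub_zero_iff {a v α : ℝ} (hα : 0 < α) :
    a = max (a - α * (a - v)) 0 ↔ a = max v 0 := by
  constructor
  · intro h
    have ha : 0 ≤ a := h ▸ le_max_right _ _
    rcases le_total (a - α * (a - v)) 0 with hs | hs
    · rw [max_eq_right hs] at h
      subst h
      rw [max_eq_right (by nlinarith)]
    · rw [max_eq_left hs] at h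
      have hva : v = a := by nlinarith
      rw [hva, max_eq_left ha]
  · intro h
    rcases le_total v 0 with hv | hv
    · rw [max_eq_right hv] at h
      subst h
      rw [max_eq_right (by nlinarith)]
    · rw [max_eq_left hv] at h
      subst h
      rw [sub_self, mul_zero, sub_zero, max_eq_left hv]

theorem lipschitzWith_one_euclideanSpace_map {ι : Type*} [Fintype ι] {f : ℝ → ℝ}
    (hf : LipschitzWith 1 f) :
    LipschitzWith 1 fun v : EuclideanSpace ℝ ι => WithLp.toLp 2 fun i => f (v i) :=
  LipschitzWith.of_dist_le_mul fun u v => by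
    rw [NNReal.coe_one, one_mul, EuclideanSpace.dist_eq, EuclideanSpace.dist_eq]
    gcongr with i
    simpa using hf.dist_le_mul (u i) (v i)

theorem Matrix.mul_dotProduct_self_le_of_posSemidef {ι : Type*} [Fintype ι] [DecidableEq ι]
    {A : Matrix ι ι ℝ} {m : ℝ} (h : ((1 / 2 : ℝ) • (A + Aᵀ) - m • 1).PosSemidef) (v : ι → ℝ) :
    m * (v ⬝ᵥ v) ≤ v ⬝ᵥ A *ᵥ v := by
  have h0 := h.dotProduct_mulVec_nonneg v
  simp only [star_trivial, sub_mulVec, add_mulVec, smul_mulVec, one_mulVec, dotProduct_sub,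
    dotProduct_add, dotProduct_smul, smul_eq_mul, mulVec_transpose] at h0
  rw [dotProduct_comm v (v ᵥ* A), ← dotProduct_mulVec] at h0
  linarith

/-- **Existence and uniqueness of the ReLU monDEQ equilibrium.**
If `I - W ⪰ mI` with `m > 0`, then there is a unique `z⋆` with
`z⋆ = ReLU(W z⋆ + U x + b)` (ReLU applied componentwise). -/
theorem relu_monDEQ_unique_equilibrium (n d : ℕ)
    (W : Matrix (Fin n) (Fin n) ℝ) (m : ℝ) (hm : 0 < m)
    (hmono : ((1/2 : ℝ) • ((1 - W) + (1 - W)ᵀ) -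
        m • (1 : Matrix (Fin n) (Fin n) ℝ)).PosSemidef)
    (U : Matrix (Fin n) (Fin d) ℝ) (x : Fin d → ℝ) (b : Fin n → ℝ) :
    ∃! zs : Fin n → ℝ, zs = fun i => max ((W.mulVec zs + U.mulVec x + b) i) 0 := by
  have hA (v : EuclideanSpace ℝ (Fin n)) :
      m * ‖v‖ ^ 2 ≤ ⟪v, toEuclideanCLM (𝕜 := ℝ) (1 - W) v⟫ := by
    rw [inner_toEuclideanCLM, EuclideanSpace.real_norm_sq_eq]
    simpa [dotProduct, sq] using mul_dotProduct_self_le_of_posSemidef hmono v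
  obtain ⟨α, hα, hz⟩ := exists_pos_existsUnique_forwardBackward_fixedPoint _ hm hA
    (lipschitzWith_one_euclideanSpace_map (LipschitzWith.id.max_const 0))
    (WithLp.toLp 2 (U *ᵥ x + b))
  refine ((WithLp.equiv 2 _).symm.existsUnique_congr fun z => ?_).mpr hz
  simp only [WithLp.equiv_symm_apply, toEuclideanCLM_toLp, ← WithLp.toLp_sub, ← WithLp.toLp_smul]
  rw [(WithLp.toLp_injective 2).eq_iff, funext_iff, funext_iff]
  refine forall_congr' fun i => ?_
  rw [eq_comm (b := z i), ← eq_max_sub_mul_sub_zero_iff hα]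
  simp only [id, Pi.sub_apply, Pi.smul_apply, sub_mulVec, one_mulVec, Pi.add_apply, smul_eq_mul]
  ring_nf
end

section
/- Let f : ℝⁿ → ℝ be convex and continuous, let W ∈ ℝ^{n×n} and m > 0 satisfy (I − W) ⪰ mI, and let U ∈ ℝ^{n×d}, x ∈ ℝ^d, b ∈ ℝⁿ. Then there exists a unique z⋆ ∈ ℝⁿ satisfying z⋆ = prox_f^1(W z⋆ + U x + b); i.e., the equilibrium point of the monotone operator equilibrium network exists and is unique. -/
/-!
Put `A = 1 - W` and `c = U x + b`. By the first-order optimality condition of the prox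
objective, `z = prox_f(W z + c)` says exactly that `c - A z` is a subgradient of `f` at `z`,
i.e. `0 ∈ A z - c + ∂f(z)`. Two solutions coincide because `∂f` is monotone and `A` is strongly
monotone. For existence, when `α ‖A‖² ≤ m` the forward step `v ↦ v - α A v` is a contraction and
`prox_{αf}` is nonexpansive, so the forward-backward map `v ↦ prox_{αf}(v - α (A v - c))` is a
contraction, whose Banach fixed point solves the inclusion.
-/

open Matrix Set Filter Topology
open scoped RealInnerProductSpace

theorem ConvexOn.exists_sub_mul_norm_le {F : Type*} [NormedAddCommGroup F] [NormedSpace ℝ F]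
    [ProperSpace F] {g : F → ℝ} (hg : ConvexOn ℝ univ g) (hgc : Continuous g) :
    ∃ a C, 0 ≤ C ∧ ∀ x, a - C * ‖x‖ ≤ g x := by
  obtain ⟨x₀, -, hx₀⟩ :=
    (isCompact_closedBall (0 : F) 1).exists_isMinOn ⟨0, by simp⟩ hgc.continuousOn
  have h0 : g x₀ ≤ g 0 := hx₀ (by simp)
  refine ⟨g x₀, g 0 - g x₀, sub_nonneg.2 h0, fun x => ?_⟩
  rcases le_or_gt ‖x‖ 1 with hx | hx
  · have : g x₀ ≤ g x := hx₀ (mem_closedBall_zero_iff.2 hx)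
    nlinarith [norm_nonneg x]
  · set R := ‖x‖
    have hR : 0 < R := by linarith
    have hchord : g (R⁻¹ • x) ≤ (1 - R⁻¹) * g 0 + R⁻¹ * g x := by
      simpa using hg.2 (mem_univ 0) (mem_univ x) (sub_nonneg.2 (inv_le_one_of_one_le₀ hx.le))
        (inv_nonneg.2 hR.le) (by ring)
    have hmin : g x₀ ≤ g (R⁻¹ • x) := hx₀ (by simp [norm_smul, R, hR.ne'])
    have hscaled : R * g x₀ ≤ (R - 1) * g 0 + g x :=
      calc R * g x₀ ≤ R * ((1 - R⁻¹) * g 0 + R⁻¹ * g x) :=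
            mul_le_mul_of_nonneg_left (hmin.trans hchord) hR.le
        _ = (R - 1) * g 0 + g x := by field_simp
    nlinarith

section Prox

variable {E : Type*} [NormedAddCommGroup E] [InnerProductSpace ℝ E]

def HasSubgradientAt (f : E → ℝ) (u z : E) : Prop :=
  ∀ w, f z + ⟪u, w - z⟫ ≤ f w

/-- `IsProx f y z` means `z = prox_f^1(y)`; the paper's `prox_f^α` is `IsProx (α • f)`. -/
def IsProx (f : E → ℝ) (y z : E) : Prop :=
  ∀ w, 1 / 2 * ‖y - z‖ ^ 2 + f z ≤ 1 / 2 * ‖y - w‖ ^ 2 + f w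

variable {f : E → ℝ}

theorem HasSubgradientAt.inner_sub_sub_nonneg {u₁ u₂ z₁ z₂ : E} (h₁ : HasSubgradientAt f u₁ z₁)
    (h₂ : HasSubgradientAt f u₂ z₂) : 0 ≤ ⟪u₁ - u₂, z₁ - z₂⟫ := by
  have h₁₂ := h₁ z₂
  have h₂₁ := h₂ z₁
  rw [← neg_sub z₁ z₂, inner_neg_right] at h₁₂
  rw [inner_sub_left]
  linarith

theorem HasSubgradientAt.of_smul {α : ℝ} {u z : E} (hα : 0 < α)
    (h : HasSubgradientAt (fun w => α • f w) (α • u) z) : HasSubgradientAt f u z := fun w => by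
  have := h w
  simp only [smul_eq_mul, inner_smul_left, RCLike.conj_to_real] at this
  exact le_of_mul_le_mul_left (by linarith) hα

theorem HasSubgradientAt.isProx {y z : E} (h : HasSubgradientAt f (y - z) z) : IsProx f y z :=
  fun w => by
    have hexp : ‖y - w‖ ^ 2 = ‖y - z‖ ^ 2 - 2 * ⟪y - z, w - z⟫ + ‖w - z‖ ^ 2 := by
      rw [← norm_sub_sq_real, sub_sub_sub_cancel_right]
    nlinarith [h w, sq_nonneg ‖w - z‖]

theorem IsProx.hasSubgradientAt (hf : ConvexOn ℝ univ f) {y z : E} (h : IsProx f y z) :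
    HasSubgradientAt f (y - z) z := by
  intro w
  have hsegment : ∀ t ∈ Ioc (0 : ℝ) 1,
      ⟪y - z, w - z⟫ ≤ f w - f z + t / 2 * ‖w - z‖ ^ 2 := by
    rintro t ⟨ht0, ht1⟩
    have hconv : f (z + t • (w - z)) ≤ (1 - t) * f z + t * f w := by
      have := hf.2 (mem_univ z) (mem_univ w) (sub_nonneg.2 ht1) ht0.le (by ring)
      rwa [show (1 - t) • z + t • w = z + t • (w - z) by module, smul_eq_mul,
        smul_eq_mul] at this
    have hexp : ‖y - (z + t • (w - z))‖ ^ 2 =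
        ‖y - z‖ ^ 2 - 2 * t * ⟪y - z, w - z⟫ + t ^ 2 * ‖w - z‖ ^ 2 := by
      rw [show y - (z + t • (w - z)) = (y - z) - t • (w - z) by abel, norm_sub_sq_real,
        inner_smul_right, norm_smul, mul_pow, Real.norm_eq_abs, sq_abs]
      ring
    have hmin := h (z + t • (w - z))
    rw [hexp] at hmin
    have : t * ⟪y - z, w - z⟫ ≤ t * (f w - f z + t / 2 * ‖w - z‖ ^ 2) := by nlinarith
    exact le_of_mul_le_mul_left this ht0
  have hlim : Tendsto (fun t : ℝ => f w - f z + t / 2 * ‖w - z‖ ^ 2) (𝓝[>] 0)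
      (𝓝 (f w - f z)) := by
    have : Continuous fun t : ℝ => f w - f z + t / 2 * ‖w - z‖ ^ 2 := by fun_prop
    simpa using (this.tendsto 0).mono_left nhdsWithin_le_nhds
  have := ge_of_tendsto hlim (eventually_of_mem (Ioc_mem_nhdsGT one_pos) hsegment)
  linarith

theorem isProx_iff_hasSubgradientAt (hf : ConvexOn ℝ univ f) {y z : E} :
    IsProx f y z ↔ HasSubgradientAt f (y - z) z :=
  ⟨IsProx.hasSubgradientAt hf, HasSubgradientAt.isProx⟩

theorem IsProx.dist_le (hf : ConvexOn ℝ univ f) {y₁ y₂ z₁ z₂ : E} (h₁ : IsProx f y₁ z₁)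
    (h₂ : IsProx f y₂ z₂) : dist z₁ z₂ ≤ dist y₁ y₂ := by
  have hmono := (h₁.hasSubgradientAt hf).inner_sub_sub_nonneg (h₂.hasSubgradientAt hf)
  rw [show y₁ - z₁ - (y₂ - z₂) = (y₁ - y₂) - (z₁ - z₂) by abel, inner_sub_left,
    real_inner_self_eq_norm_sq] at hmono
  have := real_inner_le_norm (y₁ - y₂) (z₁ - z₂)
  rw [dist_eq_norm, dist_eq_norm]
  nlinarith [norm_nonneg (y₁ - y₂), norm_nonneg (z₁ - z₂)]

theorem exists_isProx [ProperSpace E] (hf : ConvexOn ℝ univ f) (hfc : Continuous f) (y : E) :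
    ∃ z, IsProx f y z := by
  obtain ⟨a, C, hC, hfa⟩ := hf.exists_sub_mul_norm_le hfc
  have hcoercive : Tendsto (fun z => 1 / 2 * ‖y - z‖ ^ 2 + f z) (cocompact E) atTop := by
    refine tendsto_atTop_mono (fun z => ?_) (tendsto_atTop_add_const_right _
      (a - (C + 1) * ‖y‖ - (C + 1) ^ 2 / 2) tendsto_norm_cocompact_atTop)
    have := norm_le_norm_add_norm_sub' z y
    nlinarith [hfa z, sq_nonneg (‖y - z‖ - (C + 1)), norm_sub_rev y z]
  exact (by fun_prop : Continuous fun z => 1 / 2 * ‖y - z‖ ^ 2 + f z).exists_forall_le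
    hcoercive

theorem norm_sub_smul_apply_le {A : E →L[ℝ] E} {m α : ℝ} (hA : ∀ v, m * ‖v‖ ^ 2 ≤ ⟪v, A v⟫)
    (hα : 0 ≤ α) (hαA : α * ‖A‖ ^ 2 ≤ m) (hαm : α * m ≤ 1) (v : E) :
    ‖v - α • A v‖ ≤ (1 - α * m / 2) * ‖v‖ := by
  have hAv : ‖A v‖ ^ 2 ≤ ‖A‖ ^ 2 * ‖v‖ ^ 2 := by
    rw [← mul_pow]; exact pow_le_pow_left₀ (norm_nonneg _) (A.le_opNorm v) 2
  have hsq : ‖v - α • A v‖ ^ 2 ≤ ((1 - α * m / 2) * ‖v‖) ^ 2 := by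
    rw [norm_sub_sq_real, inner_smul_right, norm_smul, Real.norm_of_nonneg hα]
    nlinarith [mul_le_mul_of_nonneg_left (hA v) hα, mul_le_mul_of_nonneg_left hAv (sq_nonneg α),
      mul_le_mul_of_nonneg_right hαA (mul_nonneg hα (sq_nonneg ‖v‖)), sq_nonneg (α * m * ‖v‖)]
  exact (pow_le_pow_iff_left₀ (norm_nonneg _) (by nlinarith [norm_nonneg v]) two_ne_zero).1 hsq

theorem exists_hasSubgradientAt_sub_apply [ProperSpace E] (hf : ConvexOn ℝ univ f)
    (hfc : Continuous f) {A : E →L[ℝ] E} {m : ℝ} (hm : 0 < m)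
    (hA : ∀ v, m * ‖v‖ ^ 2 ≤ ⟪v, A v⟫) (c : E) : ∃ z, HasSubgradientAt f (c - A z) z := by
  set α := m / (m ^ 2 + ‖A‖ ^ 2)
  have hden : 0 < m ^ 2 + ‖A‖ ^ 2 := by positivity
  have hα : 0 < α := div_pos hm hden
  have hαA : α * ‖A‖ ^ 2 ≤ m := by
    rw [div_mul_eq_mul_div, div_le_iff₀ hden]; nlinarith [pow_pos hm 3]
  have hαm : α * m ≤ 1 := by
    rw [div_mul_eq_mul_div, div_le_one hden]; nlinarith [sq_nonneg ‖A‖]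
  have hαf := hf.smul hα.le
  choose P hP using exists_isProx hαf (by fun_prop)
  set T := fun v => P (v - α • (A v - c))
  have hT : ContractingWith (1 - α * m / 2).toNNReal T := by
    refine ⟨Real.toNNReal_lt_one.2 (by linarith [mul_pos hα hm]),
      LipschitzWith.of_dist_le' fun v₁ v₂ => ?_⟩
    calc dist (T v₁) (T v₂) ≤ dist (v₁ - α • (A v₁ - c)) (v₂ - α • (A v₂ - c)) :=
          (hP _).dist_le hαf (hP _)
      _ = ‖(v₁ - v₂) - α • A (v₁ - v₂)‖ := by rw [dist_eq_norm, map_sub]; congr 1; module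
      _ ≤ (1 - α * m / 2) * dist v₁ v₂ := by
        rw [dist_eq_norm]; exact norm_sub_smul_apply_le hA hα.le hαA hαm _
  obtain ⟨z, hz⟩ : ∃ z, T z = z := ⟨_, hT.fixedPoint_isFixedPt⟩
  refine ⟨z, HasSubgradientAt.of_smul hα ?_⟩
  have := (hP (z - α • (A z - c))).hasSubgradientAt hαf
  rwa [show P (z - α • (A z - c)) = z from hz, show z - α • (A z - c) - z = α • (c - A z) by
    module] at this

theorem existsUnique_hasSubgradientAt_sub_apply [ProperSpace E] (hf : ConvexOn ℝ univ f)
    (hfc : Continuous f) {A : E →L[ℝ] E} {m : ℝ} (hm : 0 < m)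
    (hA : ∀ v, m * ‖v‖ ^ 2 ≤ ⟪v, A v⟫) (c : E) : ∃! z, HasSubgradientAt f (c - A z) z := by
  obtain ⟨z, hz⟩ := exists_hasSubgradientAt_sub_apply hf hfc hm hA c
  refine ⟨z, hz, fun z' hz' => ?_⟩
  have hmono := hz'.inner_sub_sub_nonneg hz
  rw [sub_sub_sub_cancel_left, ← map_sub, ← neg_sub z z', inner_neg_right, real_inner_comm]
    at hmono
  have : m * ‖z - z'‖ ^ 2 ≤ 0 := by linarith [hA (z - z')]
  have hsq : ‖z - z'‖ ^ 2 ≤ 0 := le_of_mul_le_mul_left (by rwa [mul_zero]) hm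
  simpa [sub_eq_zero, eq_comm] using hsq

theorem existsUnique_isProx_apply_add [ProperSpace E] (hf : ConvexOn ℝ univ f)
    (hfc : Continuous f) {W : E →L[ℝ] E} {m : ℝ} (hm : 0 < m)
    (hW : ∀ v, m * ‖v‖ ^ 2 ≤ ⟪v, v - W v⟫) (c : E) : ∃! z, IsProx f (W z + c) z := by
  have hA : ∀ v, m * ‖v‖ ^ 2 ≤ ⟪v, (1 - W) v⟫ := hW
  convert existsUnique_hasSubgradientAt_sub_apply hf hfc hm hA c using 2 with z
  rw [isProx_iff_hasSubgradientAt hf, show (1 - W) z = z - W z from rfl,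
    sub_sub_eq_add_sub, add_comm c]

end Prox

theorem Matrix.mul_norm_sq_le_inner_toEuclideanCLM {ι : Type*} [Fintype ι] [DecidableEq ι]
    {B : Matrix ι ι ℝ} {m : ℝ} (hB : ((1 / 2 : ℝ) • (B + Bᵀ) - m • (1 : Matrix ι ι ℝ)).PosSemidef)
    (v : EuclideanSpace ℝ ι) : m * ‖v‖ ^ 2 ≤ ⟪v, toEuclideanCLM (𝕜 := ℝ) B v⟫ := by
  have h := hB.dotProduct_mulVec_nonneg v
  rw [inner_toEuclideanCLM, ← real_inner_self_eq_norm_sq, EuclideanSpace.inner_eq_star_dotProduct]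
  rw [star_trivial, sub_mulVec, smul_mulVec, add_mulVec, mulVec_transpose, smul_mulVec,
    one_mulVec, dotProduct_sub, dotProduct_smul, dotProduct_add, dotProduct_smul,
    dotProduct_comm _ (WithLp.ofLp v ᵥ* B), ← dotProduct_mulVec] at h
  simp only [smul_eq_mul, star_trivial] at h ⊢
  linarith

theorem isProx_comp_ofLp_toLp_iff {ι : Type*} [Fintype ι] {f : (ι → ℝ) → ℝ} {y z : ι → ℝ} :
    IsProx (f ∘ WithLp.ofLp) (WithLp.toLp 2 y) (WithLp.toLp 2 z) ↔
      ∀ w, 1 / 2 * ∑ i, (y i - z i) ^ 2 + f z ≤ 1 / 2 * ∑ i, (y i - w i) ^ 2 + f w := by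
  simp only [IsProx, (WithLp.toLp_surjective 2).forall, EuclideanSpace.real_norm_sq_eq]
  rfl

/-- **Existence and uniqueness of the monDEQ equilibrium.**
For convex continuous `f` and `I - W ⪰ mI` with `m > 0`, there exists a unique
`z⋆` with `z⋆ = prox_f^1(W z⋆ + U x + b)`, i.e. a unique `z⋆` that minimizes
`z ↦ (1/2)‖(W z⋆ + U x + b) - z‖² + f z`. -/
theorem monDEQ_unique_equilibrium (n d : ℕ) (f : (Fin n → ℝ) → ℝ)
    (hf : ConvexOn ℝ Set.univ f) (hfc : Continuous f)
    (W : Matrix (Fin n) (Fin n) ℝ) (m : ℝ) (hm : 0 < m)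
    (hmono : ((1/2 : ℝ) • ((1 - W) + (1 - W)ᵀ) -
        m • (1 : Matrix (Fin n) (Fin n) ℝ)).PosSemidef)
    (U : Matrix (Fin n) (Fin d) ℝ) (x : Fin d → ℝ) (b : Fin n → ℝ) :
    ∃! zs : Fin n → ℝ, ∀ z : Fin n → ℝ,
      (1/2) * ∑ i, ((W.mulVec zs + U.mulVec x + b) i - zs i)^2 + f zs ≤
        (1/2) * ∑ i, ((W.mulVec zs + U.mulVec x + b) i - z i)^2 + f z := by
  set W' := toEuclideanCLM (𝕜 := ℝ) (n := Fin n) W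
  have hW : ∀ v, m * ‖v‖ ^ 2 ≤ ⟪v, v - W' v⟫ := by
    simpa [W'] using mul_norm_sq_le_inner_toEuclideanCLM hmono
  have hfE : ConvexOn ℝ univ (f ∘ WithLp.ofLp : EuclideanSpace ℝ (Fin n) → ℝ) :=
    hf.comp_linearMap (WithLp.linearEquiv 2 ℝ (Fin n → ℝ)).toLinearMap
  refine ((WithLp.equiv 2 (Fin n → ℝ)).symm.existsUnique_congr fun zs => ?_).2
    (existsUnique_isProx_apply_add hfE (by fun_prop) hm hW (WithLp.toLp 2 (U *ᵥ x + b)))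
  rw [← isProx_comp_ofLp_toLp_iff, WithLp.equiv_symm_apply, toEuclideanCLM_toLp, add_assoc,
    WithLp.toLp_add]
end

section
/- Let W ∈ ℝ^{n×n} and m > 0 satisfy (I − W) ⪰ mI, and let α > 0. Then the matrix I + α(I − W) is invertible, and the Cayley operator C = 2(I + α(I − W))^{-1} − I satisfies ‖C‖₂ < 1, i.e., C is a strict contraction in the Euclidean operator norm. -/
/-!
Put `A = α(I - W)`. Strong monotonicity makes `yᵀ A y > 0` for `y ≠ 0`, so `I + A` has positive
definite symmetric part and is invertible. Writing `x = (I + A) y`, the Cayley operator sends `x`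
to `y - A y`, and `‖x‖² - ‖C x‖² = ‖y + A y‖² - ‖y - A y‖² = 4 yᵀ A y > 0` for `x ≠ 0`. A linear
map shrinking every nonzero vector of a finite-dimensional space has operator norm `< 1`, because
the norm is attained on the compact unit sphere.
-/

open Matrix
open scoped Matrix.Norms.L2Operator

theorem ContinuousLinearMap.opNorm_lt_of_forall_norm_apply_lt {E F : Type*}
    [NormedAddCommGroup E] [NormedSpace ℝ E] [FiniteDimensional ℝ E]
    [NormedAddCommGroup F] [NormedSpace ℝ F] (f : E →L[ℝ] F) {C : ℝ} (hC : 0 < C)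
    (h : ∀ x ≠ 0, ‖f x‖ < C * ‖x‖) : ‖f‖ < C := by
  cases subsingleton_or_nontrivial E
  · simpa [Subsingleton.elim f 0] using hC
  obtain ⟨x, hx, hfx⟩ : ‖f‖ ∈ (fun x => ‖f x‖) '' Metric.sphere 0 1 := by
    rw [← f.sSup_sphere_eq_norm]
    exact ((isCompact_sphere 0 1).image (by fun_prop)).sSup_mem
      ((NormedSpace.sphere_nonempty.mpr zero_le_one).image _)
  rw [mem_sphere_zero_iff_norm] at hx
  simpa [hx, hfx] using h x (ne_zero_of_norm_ne_zero (hx.symm ▸ one_ne_zero))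

theorem EuclideanSpace.real_norm_sq_eq_dotProduct {ι : Type*} [Fintype ι]
    (x : EuclideanSpace ℝ ι) : ‖x‖ ^ 2 = x.ofLp ⬝ᵥ x.ofLp := by
  rw [← real_inner_self_eq_norm_sq, EuclideanSpace.inner_eq_star_dotProduct, star_trivial]

namespace Matrix

variable {ι : Type*} [Fintype ι]

theorem sub_dotProduct_sub_add_four_mul {R : Type*} [CommRing R] (x y : ι → R) :
    (x - y) ⬝ᵥ (x - y) + 4 * (x ⬝ᵥ y) = (x + y) ⬝ᵥ (x + y) := by
  simp only [sub_dotProduct, dotProduct_sub, add_dotProduct, dotProduct_add, dotProduct_comm y x]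
  ring

theorem dotProduct_self_pos {x : ι → ℝ} (hx : x ≠ 0) : 0 < x ⬝ᵥ x := by
  simpa using dotProduct_star_self_pos_iff.mpr hx

variable [DecidableEq ι]

theorem l2_opNorm_lt_one_of_forall_dotProduct_lt (M : Matrix ι ι ℝ)
    (h : ∀ x ≠ 0, M *ᵥ x ⬝ᵥ M *ᵥ x < x ⬝ᵥ x) : ‖M‖ < 1 := by
  rw [cstar_norm_def]
  refine (toEuclideanCLM (n := ι) (𝕜 := ℝ) M).opNorm_lt_of_forall_norm_apply_lt one_pos
    fun x hx => ?_
  rw [one_mul, ← sq_lt_sq₀ (norm_nonneg _) (norm_nonneg _),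
    EuclideanSpace.real_norm_sq_eq_dotProduct, EuclideanSpace.real_norm_sq_eq_dotProduct,
    ofLp_toEuclideanCLM]
  exact h _ (by simpa using hx)

theorem mul_dotProduct_self_le_of_posSemidef_s6 (M : Matrix ι ι ℝ) {m : ℝ}
    (hM : ((1/2 : ℝ) • (M + Mᵀ) - m • (1 : Matrix ι ι ℝ)).PosSemidef) (x : ι → ℝ) :
    m * (x ⬝ᵥ x) ≤ x ⬝ᵥ M *ᵥ x := by
  have hT : x ⬝ᵥ Mᵀ *ᵥ x = x ⬝ᵥ M *ᵥ x := by
    rw [mulVec_transpose, dotProduct_comm, dotProduct_mulVec]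
  have := hM.dotProduct_mulVec_nonneg x
  simp only [star_trivial, sub_mulVec, smul_mulVec, add_mulVec, one_mulVec, dotProduct_sub,
    dotProduct_smul, dotProduct_add, hT, smul_eq_mul] at this
  linarith

theorem isUnit_of_forall_dotProduct_mulVec_pos (M : Matrix ι ι ℝ)
    (hM : ∀ x ≠ 0, 0 < x ⬝ᵥ M *ᵥ x) : IsUnit M := by
  refine mulVec_injective_iff_isUnit.mp fun x y hxy => by_contra fun hne => ?_
  have := hM (x - y) (sub_ne_zero.mpr hne)
  rw [mulVec_sub, hxy, sub_self, dotProduct_zero] at this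
  exact this.false

theorem isUnit_one_add_of_forall_dotProduct_mulVec_pos (A : Matrix ι ι ℝ)
    (hA : ∀ x ≠ 0, 0 < x ⬝ᵥ A *ᵥ x) : IsUnit (1 + A) :=
  isUnit_of_forall_dotProduct_mulVec_pos _ fun x hx => by
    rw [add_mulVec, one_mulVec, dotProduct_add]
    exact add_pos (dotProduct_self_pos hx) (hA x hx)

noncomputable def cayley (A : Matrix ι ι ℝ) : Matrix ι ι ℝ := (2 : ℝ) • (1 + A)⁻¹ - 1

theorem cayley_mulVec_one_add_mulVec (A : Matrix ι ι ℝ) (hA : IsUnit (1 + A)) (y : ι → ℝ) :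
    cayley A *ᵥ ((1 + A) *ᵥ y) = y - A *ᵥ y := by
  rw [cayley, sub_mulVec, smul_mulVec, mulVec_mulVec,
    nonsing_inv_mul _ ((isUnit_iff_isUnit_det _).mp hA), one_mulVec, one_mulVec, add_mulVec,
    one_mulVec, two_smul]
  abel

theorem cayley_mulVec_dotProduct_lt (A : Matrix ι ι ℝ) (hA : ∀ x ≠ 0, 0 < x ⬝ᵥ A *ᵥ x)
    (x : ι → ℝ) (hx : x ≠ 0) : cayley A *ᵥ x ⬝ᵥ cayley A *ᵥ x < x ⬝ᵥ x := by
  have hT := isUnit_one_add_of_forall_dotProduct_mulVec_pos A hA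
  obtain ⟨y, rfl⟩ := mulVec_surjective_iff_isUnit.mpr hT x
  have hy : y ≠ 0 := by rintro rfl; simp at hx
  rw [cayley_mulVec_one_add_mulVec A hT, add_mulVec, one_mulVec,
    ← sub_dotProduct_sub_add_four_mul]
  linarith [hA y hy]

end Matrix

/-- **The Cayley operator of a strongly monotone linear operator is a strict contraction.**
If `I - W ⪰ mI` with `m > 0` and `α > 0`, then `I + α(I - W)` is invertible and
`C = 2(I + α(I - W))⁻¹ - I` satisfies `‖C‖₂ < 1` (L2 operator norm). -/
theorem cayley_strict_contraction (n : ℕ)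
    (W : Matrix (Fin n) (Fin n) ℝ) (m : ℝ) (hm : 0 < m)
    (hmono : ((1/2 : ℝ) • ((1 - W) + (1 - W)ᵀ) -
        m • (1 : Matrix (Fin n) (Fin n) ℝ)).PosSemidef)
    (α : ℝ) (hα : 0 < α) :
    IsUnit (1 + α • (1 - W) : Matrix (Fin n) (Fin n) ℝ) ∧
      ‖(2 : ℝ) • (1 + α • (1 - W) : Matrix (Fin n) (Fin n) ℝ)⁻¹ - 1‖ < 1 := by
  have hA : ∀ x ≠ 0, 0 < x ⬝ᵥ (α • (1 - W)) *ᵥ x := fun x hx => by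
    rw [smul_mulVec, dotProduct_smul, smul_eq_mul]
    exact mul_pos hα <| (mul_pos hm (dotProduct_self_pos hx)).trans_le
      (mul_dotProduct_self_le_of_posSemidef_s6 (1 - W) hmono x)
  exact ⟨isUnit_one_add_of_forall_dotProduct_mulVec_pos _ hA,
    l2_opNorm_lt_one_of_forall_dotProduct_lt (cayley _) (cayley_mulVec_dotProduct_lt _ hA)⟩
end

section
/- Let W ∈ ℝ^{n×n} and m > 0 satisfy (I − W) ⪰ mI, and let J ∈ ℝ^{n×n} be diagonal with 0 ≤ Jᵢᵢ ≤ 1 for all i, with J^{1/2} the entrywise square root. Then every complex eigenvalue λ of the matrix I − J^{1/2} W J^{1/2} satisfies Re λ > 0 (indeed Re λ ≥ min(1, m) > 0). -/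
open Matrix Polynomial

/-!
With `S = J^{1/2}`, the symmetric part of `I - SWS` is `I - S·sym(W)·S ⪰ I - (1 - m)S²`, which is
`⪰ min(1, m)·I` because `0 ⪯ S² ⪯ I`. For any real matrix `A` with `sym(A) ⪰ cI`, a complex
eigenpair `(λ, x + iy)` of `A` gives `xᵀAx + yᵀAy = Re λ · (|x|² + |y|²)`, hence `Re λ ≥ c`.
-/

section

variable {ι : Type*} [Fintype ι]

lemma re_map_ofReal_mulVec (A : Matrix ι ι ℝ) (v : ι → ℂ) (i : ι) :
    ((A.map (algebraMap ℝ ℂ) *ᵥ v) i).re = (A *ᵥ fun j => (v j).re) i := by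
  simp [mulVec, dotProduct, Complex.re_sum]

lemma im_map_ofReal_mulVec (A : Matrix ι ι ℝ) (v : ι → ℂ) (i : ι) :
    ((A.map (algebraMap ℝ ℂ) *ᵥ v) i).im = (A *ᵥ fun j => (v j).im) i := by
  simp [mulVec, dotProduct, Complex.im_sum]

variable [DecidableEq ι]

lemma le_dotProduct_mulVec_of_posSemidef {A : Matrix ι ι ℝ} {c : ℝ}
    (hA : ((1/2 : ℝ) • (A + Aᵀ) - c • (1 : Matrix ι ι ℝ)).PosSemidef) (x : ι → ℝ) :
    c * (x ⬝ᵥ x) ≤ x ⬝ᵥ A *ᵥ x := by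
  have h := hA.dotProduct_mulVec_nonneg x
  have hT : x ⬝ᵥ Aᵀ *ᵥ x = x ⬝ᵥ A *ᵥ x := by
    rw [mulVec_transpose, dotProduct_comm, dotProduct_mulVec]
  simp only [star_trivial, sub_mulVec, add_mulVec, smul_mulVec, one_mulVec, dotProduct_sub,
    dotProduct_add, dotProduct_smul, smul_eq_mul, hT] at h
  linarith

lemma le_re_of_isRoot_charpoly_map {A : Matrix ι ι ℝ} {c : ℝ}
    (hA : ∀ x, c * (x ⬝ᵥ x) ≤ x ⬝ᵥ A *ᵥ x) {μ : ℂ}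
    (hμ : (A.map (algebraMap ℝ ℂ)).charpoly.IsRoot μ) : c ≤ μ.re := by
  obtain ⟨v, hv⟩ := ((Module.End.hasEigenvalue_iff_isRoot_charpoly
    (toLin' (A.map (algebraMap ℝ ℂ))) μ).2 (by rwa [charpoly_toLin'])).exists_hasEigenvector
  have hAv : A.map (algebraMap ℝ ℂ) *ᵥ v = μ • v := by
    rw [← toLin'_apply]; exact hv.apply_eq_smul
  set x : ι → ℝ := fun i => (v i).re
  set y : ι → ℝ := fun i => (v i).im
  have hAx : A *ᵥ x = μ.re • x - μ.im • y := funext fun i => by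
    rw [← re_map_ofReal_mulVec, hAv]; simp [x, y]
  have hAy : A *ᵥ y = μ.im • x + μ.re • y := funext fun i => by
    rw [← im_map_ofReal_mulVec, hAv]
    simp only [Pi.smul_apply, smul_eq_mul, Complex.mul_im, Pi.add_apply, x, y]
    ring
  have hpos : 0 < x ⬝ᵥ x + y ⬝ᵥ y := by
    have hx : 0 ≤ x ⬝ᵥ x := Finset.sum_nonneg fun i _ => mul_self_nonneg (x i)
    have hy : 0 ≤ y ⬝ᵥ y := Finset.sum_nonneg fun i _ => mul_self_nonneg (y i)
    refine lt_of_le_of_ne (add_nonneg hx hy) fun h => hv.2 ?_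
    have hx0 : x = 0 := dotProduct_self_eq_zero.1 (by linarith)
    have hy0 : y = 0 := dotProduct_self_eq_zero.1 (by linarith)
    exact funext fun i => Complex.ext (congrFun hx0 i) (congrFun hy0 i)
  have key : x ⬝ᵥ A *ᵥ x + y ⬝ᵥ A *ᵥ y = μ.re * (x ⬝ᵥ x + y ⬝ᵥ y) := by
    rw [hAx, hAy, dotProduct_sub, dotProduct_add, dotProduct_smul, dotProduct_smul,
      dotProduct_smul, dotProduct_smul, dotProduct_comm y x]
    simp only [smul_eq_mul]; ring
  exact le_of_mul_le_mul_right (by linarith [hA x, hA y]) hpos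

lemma min_mul_le_dotProduct_one_sub_diagonal_mul_mul_diagonal_mulVec {W : Matrix ι ι ℝ} {m : ℝ}
    (hW : ∀ y, m * (y ⬝ᵥ y) ≤ y ⬝ᵥ (1 - W) *ᵥ y) {s : ι → ℝ} (hs : ∀ i, |s i| ≤ 1)
    (x : ι → ℝ) : min 1 m * (x ⬝ᵥ x) ≤ x ⬝ᵥ (1 - diagonal s * W * diagonal s) *ᵥ x := by
  set y : ι → ℝ := fun i => s i * x i
  have hdiag : ∀ z, x ⬝ᵥ diagonal s *ᵥ z = y ⬝ᵥ z := fun z => by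
    simp only [dotProduct, mulVec_diagonal, y]
    exact Finset.sum_congr rfl fun i _ => by ring
  have hform : x ⬝ᵥ (1 - diagonal s * W * diagonal s) *ᵥ x = x ⬝ᵥ x - y ⬝ᵥ W *ᵥ y := by
    rw [sub_mulVec, one_mulVec, dotProduct_sub, ← mulVec_mulVec, ← mulVec_mulVec, hdiag,
      funext (mulVec_diagonal s x)]
  have hWy : y ⬝ᵥ W *ᵥ y ≤ (1 - m) * (y ⬝ᵥ y) := by
    have := hW y
    rw [sub_mulVec, one_mulVec, dotProduct_sub] at this
    linarith
  have hy0 : 0 ≤ y ⬝ᵥ y := Finset.sum_nonneg fun i _ => mul_self_nonneg (y i)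
  have hyx : y ⬝ᵥ y ≤ x ⬝ᵥ x := Finset.sum_le_sum fun i _ => by
    have : s i * s i ≤ 1 := abs_mul_abs_self (s i) ▸ mul_le_one₀ (hs i) (abs_nonneg _) (hs i)
    nlinarith [mul_self_nonneg (x i)]
  rw [hform]
  rcases le_total m 1 with hm | hm
  · rw [min_eq_right hm]; nlinarith
  · rw [min_eq_left hm]; nlinarith

end

/-- **Eigenvalues of `I - J^{1/2} W J^{1/2}` have positive real part.**
If `I - W ⪰ mI` with `m > 0` and `J` is diagonal with `0 ≤ Jᵢᵢ ≤ 1`, then every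
complex eigenvalue `λ` of `I - J^{1/2} W J^{1/2}` (a root of its characteristic
polynomial over `ℂ`) satisfies `Re λ ≥ min(1, m) > 0`. -/
theorem eigenvalues_pos_real_part_sqrt (n : ℕ)
    (W : Matrix (Fin n) (Fin n) ℝ) (m : ℝ) (hm : 0 < m)
    (hmono : ((1/2 : ℝ) • ((1 - W) + (1 - W)ᵀ) -
        m • (1 : Matrix (Fin n) (Fin n) ℝ)).PosSemidef)
    (d : Fin n → ℝ) (hd : ∀ i, 0 ≤ d i ∧ d i ≤ 1) (lam : ℂ)
    (hlam : (((1 - Matrix.diagonal (fun i => Real.sqrt (d i)) * W *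
        Matrix.diagonal (fun i => Real.sqrt (d i))).map
          (algebraMap ℝ ℂ)).charpoly).IsRoot lam) :
    0 < lam.re ∧ min 1 m ≤ lam.re := by
  have hsqrt : ∀ i, |Real.sqrt (d i)| ≤ 1 := fun i => by
    rw [abs_of_nonneg (Real.sqrt_nonneg _)]
    exact Real.sqrt_le_one.2 (hd i).2
  have hre : min 1 m ≤ lam.re := le_re_of_isRoot_charpoly_map
    (min_mul_le_dotProduct_one_sub_diagonal_mul_mul_diagonal_mulVec
      (le_dotProduct_mulVec_of_posSemidef hmono) hsqrt) hlam
  exact ⟨(lt_min one_pos hm).trans_le hre, hre⟩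
end

section
/- Let σ : ℝ → ℝ be differentiable, W ∈ ℝ^{n×n}, c₀ ∈ ℝⁿ, and b₀ ∈ ℝⁿ. Suppose z : ℝⁿ → ℝⁿ is differentiable at b₀ and satisfies, for all b in a neighborhood of b₀, the componentwise equilibrium equation z(b)ᵢ = σ((W z(b) + c₀ + b)ᵢ) for every i. Let J ∈ ℝ^{n×n} be the diagonal matrix with Jᵢᵢ = σ′((W z(b₀) + c₀ + b₀)ᵢ), and assume I − J W is invertible. Then the Jacobian (Fréchet derivative) of z at b₀ equals (I − J W)^{-1} J. -/
open Matrix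

/-- **Implicit-function-theorem backward pass.**
If `z(b)` is differentiable at `b₀` and satisfies `z(b)ᵢ = σ((W z(b) + c₀ + b)ᵢ)` for
all `b` near `b₀`, with `J = diag(σ'((W z(b₀) + c₀ + b₀)ᵢ))` and `I - JW` invertible,
then the Jacobian of `z` at `b₀` is `(I - JW)⁻¹ J`. -/
theorem implicit_jacobian_formula (n : ℕ) (σ : ℝ → ℝ) (hσ : Differentiable ℝ σ)
    (W : Matrix (Fin n) (Fin n) ℝ) (c₀ b₀ : Fin n → ℝ)
    (z : (Fin n → ℝ) → (Fin n → ℝ)) (hz : DifferentiableAt ℝ z b₀)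
    (heq : ∀ᶠ b in nhds b₀, ∀ i, z b i = σ ((W.mulVec (z b) + c₀ + b) i))
    (J : Matrix (Fin n) (Fin n) ℝ)
    (hJ : J = Matrix.diagonal (fun i => deriv σ ((W.mulVec (z b₀) + c₀ + b₀) i)))
    (hinv : IsUnit (1 - J * W)) :
    ∀ v : Fin n → ℝ, fderiv ℝ z b₀ v = ((1 - J * W)⁻¹ * J).mulVec v := by
  set D := fderiv ℝ z b₀ with hDdef
  have hD : HasFDerivAt z D b₀ := hz.hasFDerivAt
  set a : Fin n → ℝ := W.mulVec (z b₀) + c₀ + b₀ with ha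
  -- derivative of the inner affine map
  let Wc : (Fin n → ℝ) →L[ℝ] (Fin n → ℝ) := LinearMap.toContinuousLinearMap W.mulVecLin
  have h1 : HasFDerivAt (fun b => W.mulVec (z b)) (Wc.comp D) b₀ :=
    Wc.hasFDerivAt.comp b₀ hD
  have h2 : HasFDerivAt (fun b => W.mulVec (z b) + c₀ + b)
      (Wc.comp D + ContinuousLinearMap.id ℝ (Fin n → ℝ)) b₀ := by
    simpa using (h1.add_const c₀).add (hasFDerivAt_id b₀)
  -- z eventually equals f := fun b => fun i => σ (...)
  have hfD : HasFDerivAt (fun b => fun i => σ ((W.mulVec (z b) + c₀ + b) i)) D b₀ := by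
    apply hD.congr_of_eventuallyEq
    filter_upwards [heq] with b hb
    exact funext fun i => (hb i).symm
  -- key componentwise relation
  have key : ∀ v i, D v i = J i i * ((W.mulVec (D v)) i + v i) := by
    intro v i
    have h3 : HasFDerivAt (fun b => (W.mulVec (z b) + c₀ + b) i)
        (((ContinuousLinearMap.proj i : (Fin n → ℝ) →L[ℝ] ℝ)).comp
          (Wc.comp D + ContinuousLinearMap.id ℝ (Fin n → ℝ))) b₀ :=
      ((ContinuousLinearMap.proj i : (Fin n → ℝ) →L[ℝ] ℝ)).hasFDerivAt.comp b₀ h2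
    have h4 : HasFDerivAt (fun b => σ ((W.mulVec (z b) + c₀ + b) i))
        (deriv σ (a i) • (((ContinuousLinearMap.proj i : (Fin n → ℝ) →L[ℝ] ℝ)).comp
          (Wc.comp D + ContinuousLinearMap.id ℝ (Fin n → ℝ)))) b₀ :=
      ((hσ (a i)).hasDerivAt).comp_hasFDerivAt b₀ h3
    have h5 : HasFDerivAt (fun b => σ ((W.mulVec (z b) + c₀ + b) i))
        (((ContinuousLinearMap.proj i : (Fin n → ℝ) →L[ℝ] ℝ)).comp D) b₀ :=
      ((ContinuousLinearMap.proj i : (Fin n → ℝ) →L[ℝ] ℝ)).hasFDerivAt.comp b₀ hfD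
    have huniq := h5.unique h4
    have := congrArg (fun (L : (Fin n → ℝ) →L[ℝ] ℝ) => L v) huniq
    simp only [ContinuousLinearMap.comp_apply, ContinuousLinearMap.smul_apply,
      ContinuousLinearMap.add_apply, ContinuousLinearMap.id_apply,
      ContinuousLinearMap.proj_apply, smul_eq_mul] at this
    rw [this, hJ]
    simp [Matrix.diagonal_apply_eq, Wc, Matrix.mulVecLin_apply, Pi.add_apply]
  -- linear equation
  have hlin : ∀ v, (1 - J * W).mulVec (D v) = J.mulVec v := by
    intro v
    funext i
    rw [Matrix.sub_mulVec, Matrix.one_mulVec]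
    have hJdiag : ((J * W).mulVec (D v)) i = J i i * (W.mulVec (D v)) i := by
      rw [← Matrix.mulVec_mulVec, hJ, Matrix.mulVec_diagonal, Matrix.diagonal_apply_eq]
    have hJv : (J.mulVec v) i = J i i * v i := by
      rw [hJ, Matrix.mulVec_diagonal, Matrix.diagonal_apply_eq]
    simp only [Pi.sub_apply, hJdiag, hJv]
    rw [key v i]; ring
  intro v
  have hdet : IsUnit (1 - J * W).det := (Matrix.isUnit_iff_isUnit_det _).mp hinv
  calc D v = ((1 - J * W)⁻¹ * (1 - J * W)).mulVec (D v) := by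
        rw [Matrix.nonsing_inv_mul _ hdet, Matrix.one_mulVec]
    _ = (1 - J * W)⁻¹.mulVec ((1 - J * W).mulVec (D v)) := by
        rw [Matrix.mulVec_mulVec]
    _ = (1 - J * W)⁻¹.mulVec (J.mulVec v) := by rw [hlin v]
    _ = ((1 - J * W)⁻¹ * J).mulVec v := by rw [Matrix.mulVec_mulVec]
end

section
/- Let W ∈ ℝ^{n×n} and m > 0 satisfy (I − W) ⪰ mI, let D ∈ ℝ^{n×n} be diagonal with Dᵢᵢ ≥ 0 for all i, set J = (I + D)^{-1}, and let v ∈ ℝⁿ. Then: (i) the matrix (I + D) − Wᵀ is invertible; (ii) the matrix (I − J W)ᵀ is invertible; and (iii) if ũ ∈ ℝⁿ is the unique solution of ((I + D) − Wᵀ) ũ = v — equivalently, the unique zero of the operator sum F̃(ũ) + G̃(ũ) with F̃(ũ) = (I − Wᵀ)ũ and G̃(ũ) = D ũ − v — then the vector u⋆ = v + Wᵀ ũ satisfies (I − J W)ᵀ u⋆ = v, i.e., u⋆ = (I − J W)^{-T} v. -/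
/-!
The symmetric part of `A = (I + D) - Wᵀ` is the symmetric part of `I - W` plus `D`, hence
`⪰ mI` with `m > 0`, so `xᵀ A x > 0` for `x ≠ 0` and `A` is invertible. Since `J (I + D) = I`
and `J` is symmetric, `(I - JW)ᵀ (I + D) = A`, which gives both the invertibility of
`(I - JW)ᵀ` and, because `v + Wᵀ ũ = (I + D) ũ` when `A ũ = v`, the identity `(I - JW)ᵀ u⋆ = v`.
-/

open Matrix

namespace Matrix

variable {ι : Type*}

theorem dotProduct_transpose_mulVec_self [Fintype ι] {R : Type*} [CommSemiring R]
    (A : Matrix ι ι R) (x : ι → R) : x ⬝ᵥ Aᵀ *ᵥ x = x ⬝ᵥ A *ᵥ x := by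
  rw [mulVec_transpose, dotProduct_comm, ← dotProduct_mulVec]

variable [DecidableEq ι]

theorem isUnit_of_posDef_symmPart [Fintype ι] {A : Matrix ι ι ℝ}
    (hA : ((1 / 2 : ℝ) • (A + Aᵀ)).PosDef) : IsUnit A := by
  rw [isUnit_iff_isUnit_det, isUnit_iff_ne_zero]
  intro hdet
  obtain ⟨x, hx, hAx⟩ := exists_mulVec_eq_zero_iff.mpr hdet
  have hpos := hA.dotProduct_mulVec_pos hx
  rw [star_trivial, smul_mulVec, dotProduct_smul, add_mulVec, dotProduct_add,
    dotProduct_transpose_mulVec_self, hAx, dotProduct_zero] at hpos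
  simp at hpos

theorem posDef_symmPart_one_add_diagonal_sub_transpose {W : Matrix ι ι ℝ} {m : ℝ} (hm : 0 < m)
    (hmono : ((1 / 2 : ℝ) • ((1 - W) + (1 - W)ᵀ) - m • (1 : Matrix ι ι ℝ)).PosSemidef)
    {d : ι → ℝ} (hd : ∀ i, 0 ≤ d i) :
    ((1 / 2 : ℝ) • ((1 + diagonal d - Wᵀ) + (1 + diagonal d - Wᵀ)ᵀ)).PosDef := by
  have hsplit : (1 / 2 : ℝ) • ((1 + diagonal d - Wᵀ) + (1 + diagonal d - Wᵀ)ᵀ) = ((1 / 2 : ℝ) • ((1 - W) + (1 - W)ᵀ) - m • 1)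
      + diagonal (fun i => m + d i) := by
    rw [← diagonal_add, ← smul_one_eq_diagonal]
    simp only [transpose_sub, transpose_add, transpose_one, diagonal_transpose,
      transpose_transpose]
    module
  rw [hsplit]
  exact PosDef.posSemidef_add hmono (PosDef.diagonal fun i => by linarith [hd i])

theorem diagonal_inv_mul_one_add_diagonal [Fintype ι] {K : Type*} [Field K] {d : ι → K}
    (hd : ∀ i, 1 + d i ≠ 0) : diagonal (fun i => (1 + d i)⁻¹) * (1 + diagonal d) = 1 := by
  rw [← diagonal_one, diagonal_add, diagonal_mul_diagonal]
  exact congrArg diagonal (funext fun i => inv_mul_cancel₀ (hd i))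

theorem transpose_one_sub_mul_mul [Fintype ι] {R : Type*} [CommRing R] {J E : Matrix ι ι R}
    (hJ : Jᵀ = J) (hJE : J * E = 1) (W : Matrix ι ι R) : (1 - J * W)ᵀ * E = E - Wᵀ := by
  rw [transpose_sub, transpose_one, transpose_mul, hJ, sub_mul, one_mul, mul_assoc, hJE, mul_one]

end Matrix

/-- **Theorem 3 (backward pass as an operator splitting problem).**
If `I - W ⪰ mI` with `m > 0`, `D` is diagonal with `Dᵢᵢ ≥ 0`, and
`J = (I + D)⁻¹` (the diagonal matrix with entries `1/(1 + Dᵢᵢ)`), then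
(i) `(I + D) - Wᵀ` is invertible; (ii) `(I - JW)ᵀ` is invertible; and (iii) if
`((I + D) - Wᵀ) ũ = v` then `u⋆ = v + Wᵀ ũ` satisfies `(I - JW)ᵀ u⋆ = v`,
i.e. `u⋆ = (I - JW)⁻ᵀ v`. -/
theorem backward_pass_splitting (n : ℕ)
    (W : Matrix (Fin n) (Fin n) ℝ) (m : ℝ) (hm : 0 < m)
    (hmono : ((1/2 : ℝ) • ((1 - W) + (1 - W)ᵀ) -
        m • (1 : Matrix (Fin n) (Fin n) ℝ)).PosSemidef)
    (d : Fin n → ℝ) (hd : ∀ i, 0 ≤ d i)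
    (J : Matrix (Fin n) (Fin n) ℝ) (hJ : J = Matrix.diagonal (fun i => (1 + d i)⁻¹))
    (v ut : Fin n → ℝ) :
    IsUnit ((1 + Matrix.diagonal d) - Wᵀ : Matrix (Fin n) (Fin n) ℝ) ∧
    IsUnit ((1 - J * W)ᵀ) ∧
    (((1 + Matrix.diagonal d) - Wᵀ).mulVec ut = v →
      ((1 - J * W)ᵀ).mulVec (v + Wᵀ.mulVec ut) = v) := by
  have hA := isUnit_of_posDef_symmPart (posDef_symmPart_one_add_diagonal_sub_transpose hm hmono hd)
  have hJE : J * (1 + diagonal d) = 1 :=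
    hJ ▸ diagonal_inv_mul_one_add_diagonal fun i => by linarith [hd i]
  have hfactor := transpose_one_sub_mul_mul (hJ ▸ diagonal_transpose _) hJE W
  refine ⟨hA, ?_, fun hsol => ?_⟩
  · rw [isUnit_iff_isUnit_det] at hA ⊢
    rw [← hfactor, det_mul] at hA
    exact isUnit_of_mul_isUnit_left hA
  · have hu : v + Wᵀ *ᵥ ut = (1 + diagonal d) *ᵥ ut := by
      rw [← hsol, sub_mulVec, sub_add_cancel]
    rw [hu, mulVec_mulVec, hfactor, hsol]
end
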